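/- On the polynomial algebra ℂ[x_1,x_2,x_3,x_4], with E^i_j = φ̃^i ∘ φ_j the bosonic oscillator realization of u(2,2) (φ = (∂_1, ∂_2, x_3·, x_4·), φ̃ = (x_1·, x_2·, −∂_3, −∂_4)), set ⟨E⟩ = Σ_c E^c_c, (E²)^i_j = Σ_k E^i_k ∘ E^k_j, and ⟨E²⟩ = Σ_c (E²)^c_c. Then for all i,j ∈ {1,…,4}, the operator (E²)^i_j − E^i_j ∘ (⟨E⟩ + 3·id) − ½ δ^i_j (⟨E²⟩ − ⟨E⟩∘⟨E⟩ − 3⟨E⟩) is identically zero on ℂ[x_1,x_2,x_3,x_4]. That is, the right-hand side of the gl₂(4/1)^{α,c} anticommutator {Q̄^i, Q_j} with parameter α = −3 and central charge c = 0 vanishes identically in this realization, so the module is a zero-step module: the odd (supersymmetry) generators can be taken identically zero. -/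
import Mathlib

open MvPolynomial LinearMap

abbrev PE := Module.End ℂ (MvPolynomial (Fin 4) ℂ)

lemma pderiv_pderiv_comm (i j : Fin 4) (p : MvPolynomial (Fin 4) ℂ) :
    pderiv i (pderiv j p) = pderiv j (pderiv i p) := by
  induction p using MvPolynomial.induction_on with
  | C a => simp
  | add p q hp hq => simp [hp, hq]
  | mul_X p k hp =>
    simp only [pderiv_mul, map_add, pderiv_X, Pi.single_apply, hp]
    split_ifs <;> simp [pderiv_one] <;> ring

lemma hDD (i j : Fin 4) : ((pderiv i).toLinearMap : PE) * (pderiv j).toLinearMap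
    = (pderiv j).toLinearMap * (pderiv i).toLinearMap :=
  LinearMap.ext fun p => pderiv_pderiv_comm i j p

lemma hXX (i j : Fin 4) : (mulLeft ℂ (X i) : PE) * mulLeft ℂ (X j)
    = mulLeft ℂ (X j) * mulLeft ℂ (X i) :=
  LinearMap.ext fun p => by simp [Module.End.mul_apply]; ring

lemma hDX (i j : Fin 4) : ((pderiv i).toLinearMap : PE) * mulLeft ℂ (X j)
    = mulLeft ℂ (X j) * (pderiv i).toLinearMap + if i = j then 1 else 0 := by
  by_cases h : i = j
  · subst h
    exact LinearMap.ext fun p => by simp [Module.End.mul_apply, pderiv_mul, add_comm]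
  · simp only [h, if_neg, ite_false, add_zero]
    exact LinearMap.ext fun p => by
      simp [Module.End.mul_apply, pderiv_mul, pderiv_X_of_ne (Ne.symm h)]

lemma hDnD (i j : Fin 4) : ((pderiv i).toLinearMap : PE) * (-(pderiv j).toLinearMap)
    = (-(pderiv j).toLinearMap) * (pderiv i).toLinearMap :=
  LinearMap.ext fun p => by
    simp [Module.End.mul_apply, pderiv_pderiv_comm i j p]

lemma hXnD (i j : Fin 4) : (mulLeft ℂ (X i) : PE) * (-(pderiv j).toLinearMap)
    = (-(pderiv j).toLinearMap) * mulLeft ℂ (X i) + if i = j then 1 else 0 := by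
  by_cases h : i = j
  · subst h
    simp only [if_pos rfl]
    exact LinearMap.ext fun p => by
      simp [Module.End.mul_apply, pderiv_mul]
  · simp only [if_neg h, add_zero]
    exact LinearMap.ext fun p => by
      simp [Module.End.mul_apply, pderiv_mul, pderiv_X_of_ne h]

/-- The bosonic oscillator operators `φ = (∂/∂x₁, ∂/∂x₂, x₃·, x₄·)` on
`ℂ[x₁,x₂,x₃,x₄]`. -/
noncomputable def bosPhi : Fin 4 → Module.End ℂ (MvPolynomial (Fin 4) ℂ) :=
  ![(MvPolynomial.pderiv 0).toLinearMap, (MvPolynomial.pderiv 1).toLinearMap,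
    LinearMap.mulLeft ℂ (MvPolynomial.X 2), LinearMap.mulLeft ℂ (MvPolynomial.X 3)]

/-- The bosonic oscillator operators `φ̃ = (x₁·, x₂·, −∂/∂x₃, −∂/∂x₄)` on
`ℂ[x₁,x₂,x₃,x₄]`. -/
noncomputable def bosPhiT : Fin 4 → Module.End ℂ (MvPolynomial (Fin 4) ℂ) :=
  ![LinearMap.mulLeft ℂ (MvPolynomial.X 0), LinearMap.mulLeft ℂ (MvPolynomial.X 1),
    -(MvPolynomial.pderiv 2).toLinearMap, -(MvPolynomial.pderiv 3).toLinearMap]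

/-- The bosonic oscillator realization `E^i_j = φ̃^i ∘ φ_j` of `u(2,2)`. -/
noncomputable def bosE (i j : Fin 4) : Module.End ℂ (MvPolynomial (Fin 4) ℂ) :=
  bosPhiT i * bosPhi j

/-- The linear Casimir `⟨E⟩ = Σ_c E^c_c`. -/
noncomputable def bosTrE : Module.End ℂ (MvPolynomial (Fin 4) ℂ) :=
  ∑ c : Fin 4, bosE c c

/-- The quadratic Casimir array `(E²)^i_j = Σ_k E^i_k ∘ E^k_j`. -/
noncomputable def bosE2 (i j : Fin 4) : Module.End ℂ (MvPolynomial (Fin 4) ℂ) :=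
  ∑ k : Fin 4, bosE i k * bosE k j

/-- `⟨E²⟩ = Σ_c (E²)^c_c`. -/
noncomputable def bosTrE2 : Module.End ℂ (MvPolynomial (Fin 4) ℂ) :=
  ∑ c : Fin 4, bosE2 c c

lemma L1 (k j : Fin 4) : bosPhi k * bosPhiT j
    = bosPhiT j * bosPhi k + if k = j then 1 else 0 := by
  fin_cases k <;> fin_cases j <;>
    simp only [bosPhi, bosPhiT, Matrix.cons_val_zero, Matrix.cons_val_one, Matrix.head_cons,
      Matrix.cons_val_succ, Fin.mk_zero, Fin.mk_one] <;>
    norm_num [Fin.ext_iff] <;>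
    (first
      | (rw [hDX]; try norm_num [Fin.ext_iff])
      | (rw [hXX]; try norm_num)
      | (rw [hDnD]; try norm_num)
      | (rw [hXnD]; try norm_num [Fin.ext_iff])
      | skip) <;>
    decide

lemma L2 (k j : Fin 4) : bosPhi k * bosPhi j = bosPhi j * bosPhi k := by
  fin_cases k <;> fin_cases j <;>
    simp only [bosPhi, Matrix.cons_val_zero, Matrix.cons_val_one, Matrix.head_cons,
      Matrix.cons_val_succ, Fin.mk_zero, Fin.mk_one] <;>
    norm_num [Fin.ext_iff] <;>
    first
      | (rw [hDD])
      | (rw [hXX])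
      | (rw [hDX]; try norm_num [Fin.ext_iff]) <;> decide

lemma trE_phi (j : Fin 4) : bosPhi j * bosTrE = bosTrE * bosPhi j + bosPhi j := by
  unfold bosTrE bosE
  rw [Finset.mul_sum, Finset.sum_mul]
  have key : ∀ c : Fin 4, bosPhi j * (bosPhiT c * bosPhi c)
      = bosPhiT c * bosPhi c * bosPhi j + if j = c then bosPhi c else 0 := by
    intro c
    calc bosPhi j * (bosPhiT c * bosPhi c)
        = (bosPhi j * bosPhiT c) * bosPhi c := by rw [mul_assoc]
      _ = (bosPhiT c * bosPhi j + if j = c then 1 else 0) * bosPhi c := by rw [L1]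
      _ = bosPhiT c * (bosPhi j * bosPhi c) + (if j = c then 1 else 0) * bosPhi c := by
          rw [add_mul, mul_assoc]
      _ = bosPhiT c * (bosPhi c * bosPhi j) + (if j = c then bosPhi c else 0) := by
          rw [L2]; split_ifs <;> simp
      _ = bosPhiT c * bosPhi c * bosPhi j + if j = c then bosPhi c else 0 := by
          rw [mul_assoc]
  simp_rw [key]
  rw [Finset.sum_add_distrib, Finset.sum_ite_eq]
  simp

lemma phi_trE (j : Fin 4) : bosTrE * bosPhi j = bosPhi j * bosTrE - bosPhi j := by
  rw [eq_sub_iff_add_eq, ← trE_phi j]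

lemma E2_eq (i j : Fin 4) :
    bosE2 i j = bosE i j * (bosTrE + 3 • (1 : Module.End ℂ (MvPolynomial (Fin 4) ℂ))) := by
  have hterm : ∀ k : Fin 4, (bosPhiT i * bosPhi k) * (bosPhiT k * bosPhi j)
      = bosPhiT i * ((bosPhiT k * bosPhi k) * bosPhi j) + bosPhiT i * bosPhi j := by
    intro k
    have h := L1 k k
    rw [if_pos rfl] at h
    calc (bosPhiT i * bosPhi k) * (bosPhiT k * bosPhi j)
        = bosPhiT i * ((bosPhi k * bosPhiT k) * bosPhi j) := by
          rw [mul_assoc, ← mul_assoc (bosPhi k)]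
      _ = bosPhiT i * ((bosPhiT k * bosPhi k + 1) * bosPhi j) := by rw [h]
      _ = bosPhiT i * ((bosPhiT k * bosPhi k) * bosPhi j) + bosPhiT i * bosPhi j := by
          rw [add_mul, one_mul, mul_add]
  unfold bosE2 bosE
  simp_rw [hterm]
  rw [Finset.sum_add_distrib, Finset.sum_const, ← Finset.mul_sum, ← Finset.sum_mul]
  have : (∑ k : Fin 4, bosPhiT k * bosPhi k) = bosTrE := by unfold bosTrE bosE; rfl
  rw [this, phi_trE j]
  simp only [Finset.card_univ, Fintype.card_fin]
  rw [mul_sub, ← mul_assoc, mul_add]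
  have h1 : (bosPhiT i * bosPhi j) * (3 • (1 : Module.End ℂ (MvPolynomial (Fin 4) ℂ)))
      = 3 • (bosPhiT i * bosPhi j) := by
    rw [mul_smul_comm, mul_one]
  rw [h1]
  abel

lemma trE2_eq : bosTrE2 = bosTrE * bosTrE + 3 • bosTrE := by
  unfold bosTrE2
  simp_rw [E2_eq]
  rw [← Finset.sum_mul]
  have : (∑ c : Fin 4, bosE c c) = bosTrE := rfl
  rw [this, mul_add, mul_smul_comm, mul_one]

/-- In the bosonic oscillator realization of `u(2,2)`, the right-hand side of the
`gl₂(4/1)^{α,c}` anticommutator `{Q̄^i, Q_j}` with `α = −3`, `c = 0`, namely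
`(E²)^i_j − E^i_j∘(⟨E⟩ + 3·id) − ½δ^i_j(⟨E²⟩ − ⟨E⟩∘⟨E⟩ − 3⟨E⟩)`, vanishes
identically: the module is a zero-step module, on which the odd (supersymmetry)
generators can be taken identically zero. -/
theorem bosonic_zero_step (i j : Fin 4) :
    bosE2 i j -
        bosE i j * (bosTrE + 3 • (1 : Module.End ℂ (MvPolynomial (Fin 4) ℂ))) -
        (if i = j then (1 / 2 : ℂ) • (bosTrE2 - bosTrE * bosTrE - 3 • bosTrE)
          else 0) = 0 := by
  rw [E2_eq, trE2_eq]
  split_ifs <;> simp
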